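/- For all positive integers n and m, there exists an n × m doubly stochastic array A such that |supp A| = n + m − gcd(n, m). -/

import Mathlib

/-!
Cut `[0, n m)` into `n` consecutive blocks of length `m` (the rows) and into `m` consecutive
blocks of length `n` (the columns), and let `A i j` be the length of the overlap of row block `i`
with column block `j`. Every row sums to `m` and every column to `n`. The nonzero entries are the
pieces of the common refinement of the two partitions, one for each left endpoint: the points of
`[0, n m)` that are multiples of `m` or of `n`. By inclusion–exclusion there are
`n + m - n m / lcm n m = n + m - gcd n m` of them.
-/

/-- An `n × m` real matrix is a *doubly stochastic array* if its entries are
nonnegative, each column sums to `n` and each row sums to `m`. -/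
def IsDSA (n m : ℕ) (A : Matrix (Fin n) (Fin m) ℝ) : Prop :=
  (∀ i j, 0 ≤ A i j) ∧ (∀ j, ∑ i, A i j = (n : ℝ)) ∧ (∀ i, ∑ j, A i j = (m : ℝ))

/-- An array `A ∈ S(n,m)` is *extremal* if it cannot be written as a convex
combination of two doubly stochastic arrays both different from `A`. -/
def IsExtremal (n m : ℕ) (A : Matrix (Fin n) (Fin m) ℝ) : Prop :=
  IsDSA n m A ∧ ∀ (B C : Matrix (Fin n) (Fin m) ℝ) (t : ℝ),
    IsDSA n m B → IsDSA n m C → 0 < t → t < 1 →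
    A = t • B + (1 - t) • C → B = A ∨ C = A

/-- The support of a matrix: the set of positions of its nonzero entries. -/
def matSupp (n m : ℕ) (A : Matrix (Fin n) (Fin m) ℝ) : Set (Fin n × Fin m) :=
  {p | A p.1 p.2 ≠ 0}

/-- The size of the support of a matrix. -/
noncomputable def suppCard (n m : ℕ) (A : Matrix (Fin n) (Fin m) ℝ) : ℕ :=
  (matSupp n m A).ncard

/-- A subset `Ω` of positions contains a *cycle* if there are `s ≥ 2`, distinct row
indices `i₁,…,i_s` and distinct column indices `j₁,…,j_s` such that all the pairs
`(i₁,j₁), (i₂,j₁), (i₂,j₂), (i₃,j₂), …, (i_s,j_s), (i₁,j_s)` belong to `Ω`. -/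
def ContainsCycle (n m : ℕ) (Ω : Set (Fin n × Fin m)) : Prop :=
  ∃ s : ℕ, 2 ≤ s ∧ ∃ (i : ZMod s → Fin n) (j : ZMod s → Fin m),
    Function.Injective i ∧ Function.Injective j ∧
    ∀ t : ZMod s, (i t, j t) ∈ Ω ∧ (i (t + 1), j t) ∈ Ω

/-- Two matrices are *equivalent* if one is obtained from the other by a
permutation of rows and a permutation of columns. -/
def MatEquiv (n m : ℕ) (A B : Matrix (Fin n) (Fin m) ℝ) : Prop :=
  ∃ (σ : Equiv.Perm (Fin n)) (τ : Equiv.Perm (Fin m)), ∀ i j, B i j = A (σ i) (τ j)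

open Finset

lemma card_filter_dvd_range_mul (k : ℕ) {d : ℕ} (hd : 0 < d) :
    #{x ∈ range (k * d) | d ∣ x} = k := by
  have : {x ∈ range (k * d) | d ∣ x} = (range k).map ⟨(· * d), mul_left_injective₀ hd.ne'⟩ := by
    ext x
    simp only [mem_filter, mem_range, mem_map, Function.Embedding.coeFn_mk]
    constructor
    · rintro ⟨hx, c, rfl⟩
      exact ⟨c, by nlinarith, mul_comm c d⟩
    · rintro ⟨c, hc, rfl⟩
      exact ⟨Nat.mul_lt_mul_of_pos_right hc hd, dvd_mul_left d c⟩
  simp [this]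

lemma card_filter_dvd_or_dvd_range_mul {n m : ℕ} (hn : 0 < n) (hm : 0 < m) :
    #{x ∈ range (n * m) | m ∣ x ∨ n ∣ x} = n + m - Nat.gcd n m := by
  have hm_mul : #{x ∈ range (n * m) | m ∣ x} = n := card_filter_dvd_range_mul n hm
  have hn_mul : #{x ∈ range (n * m) | n ∣ x} = m := by
    rw [mul_comm]; exact card_filter_dvd_range_mul m hn
  have hlcm_mul : #{x ∈ range (n * m) | m ∣ x ∧ n ∣ x} = Nat.gcd n m := by
    simp_rw [← Nat.lcm_dvd_iff]
    rw [← Nat.gcd_mul_lcm n m, Nat.lcm_comm]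
    exact card_filter_dvd_range_mul _ (Nat.lcm_pos hn hm)
  have hunion := card_union_add_card_inter {x ∈ range (n * m) | m ∣ x} {x ∈ range (n * m) | n ∣ x}
  rw [← filter_or, ← filter_and, hm_mul, hn_mul, hlcm_mul] at hunion
  omega

lemma card_filter_div_eq (a : ℕ) {b i : ℕ} (hb : 0 < b) (hi : i < a) :
    #{x ∈ range (a * b) | x / b = i} = b := by
  have : {x ∈ range (a * b) | x / b = i} = Ico (i * b) ((i + 1) * b) := by
    ext x
    simp only [mem_filter, mem_range, mem_Ico, Nat.div_eq_iff hb, add_mul, one_mul]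
    have hia : (i + 1) * b ≤ a * b := Nat.mul_le_mul_right b hi
    constructor
    · omega
    · intro h
      exact ⟨by nlinarith, by omega⟩
  simp [this, Nat.card_Ico, add_mul]

lemma sum_card_filter_div_eq {s : Finset ℕ} {b c : ℕ} (hs : ∀ x ∈ s, x / b < c) :
    ∑ j : Fin c, #{x ∈ s | x / b = j} = #s := by
  rw [Fin.sum_univ_eq_sum_range (fun j => #{x ∈ s | x / b = j}),
    card_eq_sum_card_fiberwise (fun x hx => mem_range.2 (hs x hx))]

lemma sum_card_filter_div_eq_and_div_eq {a b i : ℕ} (hb : 0 < b) (hi : i < a) :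
    ∑ j : Fin b, #{x ∈ range (a * b) | x / b = i ∧ x / a = j} = b := by
  simp_rw [← filter_filter]
  rw [sum_card_filter_div_eq, card_filter_div_eq a hb hi]
  intro x hx
  exact Nat.div_lt_of_lt_mul (mem_range.1 (mem_filter.1 hx).1)

lemma div_eq_of_div_mul_le_of_le {x y b : ℕ} (hb : 0 < b) (h₁ : x / b * b ≤ y) (h₂ : y ≤ x) :
    y / b = x / b :=
  le_antisymm (Nat.div_le_div_right h₂) ((Nat.le_div_iff_mul_le hb).2 h₁)

lemma le_of_div_eq_of_dvd {x y b : ℕ} (hy : b ∣ y) (h : x / b = y / b) : y ≤ x := by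
  calc y = y / b * b := (Nat.div_mul_cancel hy).symm
    _ = x / b * b := by rw [h]
    _ ≤ x := Nat.div_mul_le_self x b

lemma image_div_pair_range_eq_image_filter_dvd {b c : ℕ} (hb : 0 < b) (hc : 0 < c) (N : ℕ) :
    (range N).image (fun x => (x / b, x / c)) =
      {x ∈ range N | b ∣ x ∨ c ∣ x}.image (fun x => (x / b, x / c)) := by
  refine Subset.antisymm (fun p hp => ?_) (image_subset_image (filter_subset _ _))
  obtain ⟨x, hx, rfl⟩ := mem_image.1 hp
  -- the piece of the common refinement containing `x` starts at `y`
  set y := max (x / b * b) (x / c * c)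
  have hyx : y ≤ x := max_le (Nat.div_mul_le_self x b) (Nat.div_mul_le_self x c)
  have hy : b ∣ y ∨ c ∣ y := by
    rcases max_choice (x / b * b) (x / c * c) with h | h <;>
      simp only [y, h, dvd_mul_left, true_or, or_true]
  refine mem_image.2 ⟨y, mem_filter.2 ⟨mem_range.2 (hyx.trans_lt (mem_range.1 hx)), hy⟩, ?_⟩
  rw [div_eq_of_div_mul_le_of_le hb (le_max_left _ _) hyx,
    div_eq_of_div_mul_le_of_le hc (le_max_right _ _) hyx]

lemma injOn_div_pair {b c : ℕ} :
    Set.InjOn (fun x => (x / b, x / c)) {x | b ∣ x ∨ c ∣ x} := by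
  have key : ∀ x y, (b ∣ y ∨ c ∣ y) → x / b = y / b → x / c = y / c → y ≤ x := by
    rintro x y (hy | hy) hb hc
    exacts [le_of_div_eq_of_dvd hy hb, le_of_div_eq_of_dvd hy hc]
  intro x hx y hy h
  obtain ⟨hb, hc⟩ := Prod.mk.inj h
  exact le_antisymm (key y x hx hb.symm hc.symm) (key x y hy hb hc)

/-- The north-west corner rule: entry `(i, j)` is the length of the overlap of
`[i m, (i + 1) m)` and `[j n, (j + 1) n)`. -/
noncomputable def staircase (n m : ℕ) : Matrix (Fin n) (Fin m) ℝ :=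
  fun i j => #{x ∈ range (n * m) | x / m = i ∧ x / n = j}

lemma staircase_isDSA {n m : ℕ} (hn : 0 < n) (hm : 0 < m) : IsDSA n m (staircase n m) := by
  refine ⟨fun i j => Nat.cast_nonneg _, fun j => ?_, fun i => ?_⟩
  · simp only [staircase, and_comm (a := _ / m = _)]
    rw [← Nat.cast_sum, mul_comm n m, sum_card_filter_div_eq_and_div_eq hn j.isLt]
  · simp only [staircase]
    rw [← Nat.cast_sum, sum_card_filter_div_eq_and_div_eq hm i.isLt]

lemma suppCard_staircase (n m : ℕ) :
    suppCard n m (staircase n m) = #((range (n * m)).image (fun x => (x / m, x / n))) := by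
  have hsupp : Prod.map Fin.val Fin.val '' matSupp n m (staircase n m) =
      ↑((range (n * m)).image (fun x => (x / m, x / n))) := by
    ext ⟨a, b⟩
    simp only [matSupp, staircase, Set.mem_image, Set.mem_ofPred_eq, Nat.cast_ne_zero,
      ← Nat.pos_iff_ne_zero, card_pos, filter_nonempty_iff, mem_range, Prod.exists, Prod.map,
      Prod.mk.injEq, coe_image, coe_range, Set.mem_Iio]
    constructor
    · rintro ⟨i, j, ⟨x, hx, hi, hj⟩, rfl, rfl⟩
      exact ⟨x, hx, hi, hj⟩
    · rintro ⟨x, hx, rfl, rfl⟩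
      exact ⟨⟨x / m, Nat.div_lt_of_lt_mul (by rwa [mul_comm])⟩, ⟨x / n, Nat.div_lt_of_lt_mul hx⟩,
        ⟨x, hx, rfl, rfl⟩, rfl, rfl⟩
  rw [suppCard, ← Set.ncard_image_of_injective _ (Fin.val_injective.prodMap Fin.val_injective),
    hsupp, Set.ncard_coe_finset]

/-- For all positive integers `n, m` there exists an `n × m` doubly
stochastic array whose support has size `n + m − gcd(n,m)`. -/
theorem exists_minimal_support (n m : ℕ) (hn : 0 < n) (hm : 0 < m) :
    ∃ A : Matrix (Fin n) (Fin m) ℝ, IsDSA n m A ∧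
      suppCard n m A = n + m - Nat.gcd n m := by
  refine ⟨staircase n m, staircase_isDSA hn hm, ?_⟩
  have hinj : Set.InjOn (fun x => (x / m, x / n)) ↑{x ∈ range (n * m) | m ∣ x ∨ n ∣ x} :=
    injOn_div_pair.mono fun x hx => (mem_filter.1 hx).2
  rw [suppCard_staircase, image_div_pair_range_eq_image_filter_dvd hm hn, card_image_of_injOn hinj,
    card_filter_dvd_or_dvd_range_mul hn hm]
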